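/- arXiv:2506.22675 — 5 statements merged into one kernel-verified Lean document; each statement's English description precedes it below -/
import Mathlib

section
/- Suppose the joint distribution of latent z and data D factorizes as p(z, D) = p(z) * prod over environments e and samples i of [p_e(x_{ei}^z) * g(y_{ei} | x_{ei}^z) * p_e(x_{ei}^{-z} | x_{ei}^z, y_{ei})], where p_e(x^z) p_e(y | x^z) p_e(x^{-z} | x^z, y) = p_e(x, y) for each e. Then the posterior satisfies p(z | D) proportional to p(z) * prod over e, i of [g(y_{ei} | x_{ei}^z) / p_e(y_{ei} | x_{ei}^z)], where the constant of proportionality is prod over e, i of p_e(x_{ei}, y_{ei}) divided by the marginal likelihood. -/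
open Finset

/-- Posterior expression for Bayesian Invariant Prediction.  With
`pZ` the prior over feature selectors, and for each selector `z`, environment `e`
and sample `i`:
* `pxz z e i` the local density `p_e(x_{ei}^z)`,
* `g z e i` the pooled conditional density `g(y_{ei} | x_{ei}^z)`,
* `pycond z e i` the local conditional density `p_e(y_{ei} | x_{ei}^z)`,
* `prest z e i` the density `p_e(x_{ei}^{-z} | x_{ei}^z, y_{ei})`,
* `pjoint e i` the joint density `p_e(x_{ei}, y_{ei})`,
assuming the chain-rule identity `pxz * pycond * prest = pjoint` and positivity,
the posterior `p(z | D)` (the normalized joint `p(z, D)`) equals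
`(∏ pjoint / marginal likelihood) * p(z) * ∏ (g / pycond)`. -/
theorem bip_posterior_expression
    {Z : Type*} [Fintype Z] (Ecount ncount : ℕ)
    (pZ : Z → ℝ)
    (pxz g pycond prest : Z → Fin Ecount → Fin ncount → ℝ)
    (pjoint : Fin Ecount → Fin ncount → ℝ)
    (hchain : ∀ z e i, pxz z e i * pycond z e i * prest z e i = pjoint e i)
    (hpos_joint : ∀ e i, 0 < pjoint e i)
    (hpos_pycond : ∀ z e i, 0 < pycond z e i)
    (hpos_marg : 0 < ∑ z' : Z, pZ z' * ∏ e, ∏ i, pxz z' e i * g z' e i * prest z' e i)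
    (z : Z) :
    (pZ z * ∏ e, ∏ i, pxz z e i * g z e i * prest z e i) /
        (∑ z' : Z, pZ z' * ∏ e, ∏ i, pxz z' e i * g z' e i * prest z' e i)
      = ((∏ e, ∏ i, pjoint e i) /
          (∑ z' : Z, pZ z' * ∏ e, ∏ i, pxz z' e i * g z' e i * prest z' e i))
        * (pZ z * ∏ e, ∏ i, g z e i / pycond z e i) := by
  have key : (∏ e, ∏ i, pxz z e i * g z e i * prest z e i)
      = (∏ e, ∏ i, pjoint e i) * ∏ e, ∏ i, g z e i / pycond z e i := by
    rw [← Finset.prod_mul_distrib]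
    refine Finset.prod_congr rfl fun e _ => ?_
    rw [← Finset.prod_mul_distrib]
    refine Finset.prod_congr rfl fun i _ => ?_
    have h := hchain z e i
    have hp := (hpos_pycond z e i).ne'
    field_simp
    linear_combination g z e i * h
  rw [key]
  ring
end

section
/- Under the invariance assumption—there exists a unique z* such that p_e(y | x^{z*}) does not depend on e—the pooled conditional g(y | x^z), defined as (sum over e of the marginal of p_e(x, y) over x^{-z}) divided by (sum over e of p_e(x^z)), satisfies g(y | x^z) = p_e(y | x^z) for all environments e if and only if z = z*. -/
open Finset

/-- Identifiability of invariant features.  For each feature selector `z` let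
`F z` be the space of values of the subvector `x^z`, `pj z e x y` the density of
`(x^z, y)` in environment `e` (joint marginalized over `x^{-z}`), and
`pm z e x` the marginal density of `x^z`, assumed strictly positive and
consistent (`pm = ∫ pj dy`, encoded abstractly by the hypothesis `hmarg` on sums
over environments only where needed).  The local conditional is
`pj z e x y / pm z e x`, and the pooled conditional is
`g z x y = (∑ e, pj z e x y) / (∑ e, pm z e x)`.  If `z*` is the unique selector
whose local conditional is invariant across environments, then the pooled
conditional matches every local conditional iff `z = z*`. -/
theorem pooled_matches_local_iff_invariant
    {Z : Type*} {E : Type*} [Fintype E] [Nonempty E]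
    {Y : Type*} (F : Z → Type*)
    (pj : (z : Z) → E → F z → Y → ℝ)
    (pm : (z : Z) → E → F z → ℝ)
    (hpm_pos : ∀ z e x, 0 < pm z e x)
    (zs : Z)
    (hinv : ∀ (e e' : E) (x : F zs) (y : Y),
      pj zs e x y / pm zs e x = pj zs e' x y / pm zs e' x)
    (huniq : ∀ z : Z,
      (∀ (e e' : E) (x : F z) (y : Y),
        pj z e x y / pm z e x = pj z e' x y / pm z e' x) → z = zs)
    (z : Z) :
    (∀ (e : E) (x : F z) (y : Y),
        (∑ e', pj z e' x y) / (∑ e', pm z e' x) = pj z e x y / pm z e x)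
      ↔ z = zs := by
  constructor
  · intro h
    exact huniq z fun e e' x y => (h e x y).symm.trans (h e' x y)
  · rintro rfl
    intro e x y
    have hsum : (∑ e', pm z e' x) ≠ 0 :=
      ne_of_gt (Finset.sum_pos (fun e' _ => hpm_pos z e' x) Finset.univ_nonempty)
    have hj : ∀ e' : E, pj z e' x y = (pj z e x y / pm z e x) * pm z e' x := by
      intro e'
      have h1 := hinv e' e x y
      rw [div_eq_div_iff (hpm_pos z e' x).ne' (hpm_pos z e x).ne'] at h1
      rw [div_mul_eq_mul_div, eq_div_iff (hpm_pos z e x).ne']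
      linarith [h1]
    rw [Finset.sum_congr rfl (fun e' _ => hj e'), ← Finset.mul_sum,
      mul_div_assoc, div_self hsum, mul_one]
end

section
/- Let Z be a finite set, p a prior probability mass function on Z, and for each z let S_{n}(z) be random variables such that S_n(z)/n converges in probability to mu(z), where mu(z*) = 0 for a unique z* with p(z*) > 0, and mu(z) > 0 for every other z with p(z) > 0. Define the posterior hat-p(z) = p(z) exp(-S_n(z)) / sum_{z'} p(z') exp(-S_n(z')). Then hat-p(z*) converges in probability to 1 as n tends to infinity. -/
open MeasureTheory Filter Finset

/-- Posterior consistency.  `Z` finite, prior `p` with `p zs > 0`,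
log-likelihood ratios `S n z` with `S n z / n → μz z` in probability, where
`μz zs = 0` and `μz z > 0` for every other `z` in the support of `p`.  Then the
posterior mass at `zs`, `p zs * exp (-S n zs) / ∑ z', p z' * exp (-S n z')`,
converges in probability to 1. -/
theorem bip_posterior_consistency
    {Ω : Type*} [MeasurableSpace Ω] (μ : Measure Ω) [IsProbabilityMeasure μ]
    {Z : Type*} [Fintype Z]
    (p : Z → ℝ) (hp0 : ∀ z, 0 ≤ p z) (hp1 : ∑ z, p z = 1)
    (S : ℕ → Z → Ω → ℝ) (μz : Z → ℝ)
    (zs : Z) (hzs : 0 < p zs) (hμzs : μz zs = 0)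
    (hμpos : ∀ z, z ≠ zs → 0 < p z → 0 < μz z)
    (hconv : ∀ z, 0 < p z → ∀ ε > (0 : ℝ),
      Tendsto (fun n => μ {ω | ε ≤ |S n z ω / n - μz z|}) atTop (nhds 0)) :
    ∀ ε > (0 : ℝ),
      Tendsto (fun n => μ {ω |
          ε ≤ |p zs * Real.exp (-(S n zs ω)) /
                (∑ z', p z' * Real.exp (-(S n z' ω))) - 1|})
        atTop (nhds 0) := by
  classical
  intro ε hε
  set T : Finset Z := Finset.univ.filter (fun z => z ≠ zs ∧ 0 < p z) with hT
  by_cases hTne : T.Nonempty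
  · -- main case
    set m : ℝ := T.inf' hTne μz with hm
    have hmpos : 0 < m := by
      rw [hm, Finset.lt_inf'_iff]
      intro z hz
      rw [hT, Finset.mem_filter] at hz
      exact hμpos z hz.2.1 hz.2.2
    set δ : ℝ := m / 3 with hδ
    have hδpos : 0 < δ := by positivity
    set C : ℝ := (∑ z ∈ T, p z) / p zs with hC
    -- eventually C * exp(-n δ) < ε
    have hexp : Tendsto (fun n : ℕ => C * Real.exp (-(n : ℝ) * δ)) atTop (nhds 0) := by
      have h1 : Tendsto (fun n : ℕ => (-(n : ℝ) * δ)) atTop atBot := by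
        apply Tendsto.atBot_mul_const hδpos
        exact tendsto_neg_atBot_iff.mpr tendsto_natCast_atTop_atTop
      have h2 := (Real.tendsto_exp_atBot).comp h1
      simpa using h2.const_mul C
    have hev : ∀ᶠ n : ℕ in atTop, C * Real.exp (-(n : ℝ) * δ) < ε := by
      filter_upwards [hexp.eventually (eventually_lt_nhds hε)] with n hn using hn
    -- key pointwise inclusion
    have hincl : ∀ᶠ n : ℕ in atTop,
        {ω | ε ≤ |p zs * Real.exp (-(S n zs ω)) /
                (∑ z', p z' * Real.exp (-(S n z' ω))) - 1|} ⊆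
          ⋃ z ∈ insert zs T, {ω | δ ≤ |S n z ω / n - μz z|} := by
      filter_upwards [hev, eventually_ge_atTop 1] with n hn hn1
      intro ω hω
      by_contra hnot
      simp only [Set.mem_iUnion, not_exists] at hnot
      have hgood : ∀ z ∈ insert zs T, |S n z ω / n - μz z| < δ := by
        intro z hz
        by_contra h
        exact hnot z hz (not_lt.mp h)
      have hnpos : (0 : ℝ) < (n : ℝ) := by exact_mod_cast hn1
      set E : Z → ℝ := fun z => Real.exp (-(S n z ω)) with hE
      have hEpos : ∀ z, 0 < E z := fun z => Real.exp_pos _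
      set N : ℝ := p zs * E zs with hN
      have hNpos : 0 < N := mul_pos hzs (hEpos zs)
      set R : ℝ := ∑ z ∈ T, p z * E z with hR
      have hRnn : 0 ≤ R := Finset.sum_nonneg fun z _ => mul_nonneg (hp0 z) (hEpos z).le
      have hzsT : zs ∉ T := by simp [hT]
      have hD : (∑ z', p z' * E z') = N + R := by
        rw [← Finset.sum_subset (Finset.subset_univ (insert zs T))
          (fun z _ hz => ?_), Finset.sum_insert hzsT]
        simp only [Finset.mem_insert, not_or, hT, Finset.mem_filter, Finset.mem_univ,
          true_and, not_and, not_lt] at hz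
        have : p z = 0 := le_antisymm (hz.2 hz.1) (hp0 z)
        rw [this, zero_mul]
      -- bounds on the good event
      have hSzs : S n zs ω ≤ n * δ := by
        have := hgood zs (Finset.mem_insert_self _ _)
        rw [hμzs, sub_zero, abs_lt] at this
        have := this.2
        calc S n zs ω = (S n zs ω / n) * n := by field_simp
        _ ≤ δ * n := by nlinarith
        _ = n * δ := by ring
      have hEzs : Real.exp (-(n : ℝ) * δ) ≤ E zs := by
        apply Real.exp_le_exp.mpr
        linarith
      have hEz : ∀ z ∈ T, E z ≤ Real.exp (-(n : ℝ) * (2 * δ)) := by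
        intro z hz
        apply Real.exp_le_exp.mpr
        have hg := hgood z (Finset.mem_insert_of_mem hz)
        rw [abs_lt] at hg
        have hmz : m ≤ μz z := Finset.inf'_le _ hz
        have h1 : m - δ < S n z ω / n := by linarith
        have h2 : (m - δ) * n ≤ S n z ω := by
          have := (le_div_iff₀ hnpos).mp h1.le
          linarith
        have : 2 * δ = m - δ := by rw [hδ]; ring
        nlinarith
      have hRle : R ≤ (∑ z ∈ T, p z) * Real.exp (-(n : ℝ) * (2 * δ)) := by
        rw [Finset.sum_mul]
        apply Finset.sum_le_sum
        intro z hz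
        exact mul_le_mul_of_nonneg_left (hEz z hz) (hp0 z)
      have hNge : p zs * Real.exp (-(n : ℝ) * δ) ≤ N := by
        exact mul_le_mul_of_nonneg_left hEzs hzs.le
      -- posterior deviation
      have hDpos : 0 < N + R := by linarith
      have hpost : |N / (N + R) - 1| = R / (N + R) := by
        have hle : N / (N + R) - 1 ≤ 0 := by
          rw [sub_nonpos, div_le_one hDpos]; linarith
        rw [abs_of_nonpos hle]
        field_simp
        ring
      have hbound : R / (N + R) ≤ C * Real.exp (-(n : ℝ) * δ) := by
        have h1 : R / (N + R) ≤ R / N := by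
          gcongr; linarith
        have h2 : R / N ≤ ((∑ z ∈ T, p z) * Real.exp (-(n : ℝ) * (2 * δ))) /
            (p zs * Real.exp (-(n : ℝ) * δ)) :=
          div_le_div₀ (mul_nonneg (Finset.sum_nonneg fun z _ => hp0 z)
            (Real.exp_pos _).le) hRle (mul_pos hzs (Real.exp_pos _)) hNge
        have h3 : ((∑ z ∈ T, p z) * Real.exp (-(n : ℝ) * (2 * δ))) /
            (p zs * Real.exp (-(n : ℝ) * δ)) = C * Real.exp (-(n : ℝ) * δ) := by
          have he : Real.exp (-(n : ℝ) * (2 * δ)) =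
              Real.exp (-(n : ℝ) * δ) * Real.exp (-(n : ℝ) * δ) := by
            rw [← Real.exp_add]; ring_nf
          rw [he, hC]
          field_simp [hzs.ne', (Real.exp_pos (-(n : ℝ) * δ)).ne']
        linarith
      have hω' : ε ≤ |N / (N + R) - 1| := by
        have : (∑ z', p z' * Real.exp (-(S n z' ω))) = N + R := hD
        simpa [hN, hE, this] using hω
      rw [hpost] at hω'
      linarith
    -- conclude via subadditivity and squeeze
    have hsum : Tendsto (fun n => ∑ z ∈ insert zs T,
        μ {ω | δ ≤ |S n z ω / n - μz z|}) atTop (nhds 0) := by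
      have : (0 : ENNReal) = ∑ z ∈ insert zs T, 0 := by simp
      rw [this]
      apply tendsto_finset_sum
      intro z hz
      rcases Finset.mem_insert.mp hz with h | h
      · subst h; exact hconv _ hzs δ hδpos
      · rw [hT, Finset.mem_filter] at h
        exact hconv z h.2.2 δ hδpos
    apply tendsto_of_tendsto_of_tendsto_of_le_of_le' tendsto_const_nhds hsum
    · exact Eventually.of_forall fun n => zero_le'
    · filter_upwards [hincl] with n hn
      calc μ _ ≤ μ (⋃ z ∈ insert zs T, {ω | δ ≤ |S n z ω / n - μz z|}) :=
            measure_mono hn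
        _ ≤ ∑ z ∈ insert zs T, μ {ω | δ ≤ |S n z ω / n - μz z|} :=
            measure_biUnion_finset_le _ _
  · -- T empty: posterior is identically 1
    have hpz : ∀ z, z ≠ zs → p z = 0 := by
      intro z hz
      by_contra h
      exact hTne ⟨z, by simp [hT, hz, lt_of_le_of_ne (hp0 z) (Ne.symm h)]⟩
    have hone : ∀ n ω, p zs * Real.exp (-(S n zs ω)) /
        (∑ z', p z' * Real.exp (-(S n z' ω))) = 1 := by
      intro n ω
      have hsum : (∑ z', p z' * Real.exp (-(S n z' ω))) =
          p zs * Real.exp (-(S n zs ω)) := by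
        rw [Finset.sum_eq_single zs]
        · intro b _ hb; rw [hpz b hb, zero_mul]
        · simp
      rw [hsum, div_self]
      positivity
    have : ∀ n, {ω | ε ≤ |p zs * Real.exp (-(S n zs ω)) /
        (∑ z', p z' * Real.exp (-(S n z' ω))) - 1|} = (∅ : Set Ω) := by
      intro n
      ext ω
      simp [hone n ω, not_le.mpr hε]
    simp only [this, measure_empty]
    exact tendsto_const_nhds
end

section
/- Let Z be a finite set, p a prior on Z with support supp(p), and S_n(z) random variables with S_n(z)/n converging in probability to mu(z) where mu(z*) = 0 uniquely among supp(p) and mu(z) > 0 otherwise. Define hat-z_n = argmax over z of p(z) exp(-S_n(z)). Then hat-z_n converges in probability to z*. -/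
open MeasureTheory Filter Finset

/-- Posterior mode consistency.  With `Z` finite, prior `p` with `p zs > 0`,
`S n z / n → μz z` in probability, `μz zs = 0` and `μz z > 0` for all other `z`
in the support of `p`, any argmax selection `zhat n ω` of
`z ↦ p z * exp (-S n z ω)` over the support of `p` converges in probability to
`zs`: `P(zhat n = zs) → 1`, i.e. `P(zhat n ≠ zs) → 0`. -/
theorem bip_posterior_mode_consistency
    {Ω : Type*} [MeasurableSpace Ω] (μ : Measure Ω) [IsProbabilityMeasure μ]
    {Z : Type*} [Fintype Z]
    (p : Z → ℝ) (hp0 : ∀ z, 0 ≤ p z) (hp1 : ∑ z, p z = 1)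
    (S : ℕ → Z → Ω → ℝ) (μz : Z → ℝ)
    (zs : Z) (hzs : 0 < p zs) (hμzs : μz zs = 0)
    (hμpos : ∀ z, z ≠ zs → 0 < p z → 0 < μz z)
    (hconv : ∀ z, 0 < p z → ∀ ε > (0 : ℝ),
      Tendsto (fun n => μ {ω | ε ≤ |S n z ω / n - μz z|}) atTop (nhds 0))
    (zhat : ℕ → Ω → Z)
    (hzhat_supp : ∀ n ω, 0 < p (zhat n ω))
    (hzhat_max : ∀ n ω, ∀ z, 0 < p z →
      p z * Real.exp (-(S n z ω)) ≤ p (zhat n ω) * Real.exp (-(S n (zhat n ω) ω))) :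
    Tendsto (fun n => μ {ω | zhat n ω ≠ zs}) atTop (nhds 0) := by
  classical
  -- per-z convergence
  have key : ∀ z : Z, z ≠ zs → 0 < p z →
      Tendsto (fun n => μ {ω | zhat n ω = z}) atTop (nhds 0) := by
    intro z hz hpz
    have hμz : 0 < μz z := hμpos z hz hpz
    set ε : ℝ := μz z / 3 with hεdef
    have hεpos : 0 < ε := by positivity
    have hA := hconv z hpz ε hεpos
    have hB := hconv zs hzs ε hεpos
    have hsum : Tendsto (fun n => μ {ω | ε ≤ |S n z ω / n - μz z|}
        + μ {ω | ε ≤ |S n zs ω / n - μz zs|}) atTop (nhds 0) := by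
      simpa using hA.add hB
    set C : ℝ := Real.log (p z) - Real.log (p zs) with hCdef
    obtain ⟨N, hN⟩ := exists_nat_gt (C / ε)
    refine tendsto_of_tendsto_of_tendsto_of_le_of_le' tendsto_const_nhds hsum
      (Eventually.of_forall fun n => zero_le) ?_
    filter_upwards [eventually_ge_atTop (N + 1)] with n hn
    have hnpos : (0 : ℝ) < n := by exact_mod_cast Nat.lt_of_lt_of_le (Nat.succ_pos N) hn
    have hCn : C / n < ε := by
      rw [div_lt_iff₀ hnpos]
      have h1 : C < ε * N := by
        have := (div_lt_iff₀ hεpos).mp hN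
        linarith
      have h2 : (N : ℝ) ≤ n := by exact_mod_cast Nat.le_of_succ_le hn
      nlinarith
    have hsub : {ω | zhat n ω = z} ⊆
        {ω | ε ≤ |S n z ω / n - μz z|} ∪ {ω | ε ≤ |S n zs ω / n - μz zs|} := by
      intro ω hω
      simp only [Set.mem_setOf_eq] at hω
      by_contra hmem
      simp only [Set.mem_union, Set.mem_setOf_eq, not_or, not_le] at hmem
      obtain ⟨h1, h2⟩ := hmem
      -- from argmax property: S n z ω - S n zs ω ≤ C
      have hmax := hzhat_max n ω zs hzs
      rw [hω] at hmax
      have hlog := Real.log_le_log (by positivity) hmax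
      rw [Real.log_mul (ne_of_gt hzs) (Real.exp_ne_zero _),
          Real.log_mul (ne_of_gt hpz) (Real.exp_ne_zero _),
          Real.log_exp, Real.log_exp] at hlog
      have hab : S n z ω - S n zs ω ≤ C := by simp only [hCdef]; linarith
      have habn : S n z ω / n - S n zs ω / n ≤ C / n := by
        rw [div_sub_div_same]
        gcongr
      rw [hμzs, sub_zero] at h2
      have ha : μz z - ε < S n z ω / n := by
        have := abs_lt.mp h1; linarith
      have hb : S n zs ω / n < ε := (abs_lt.mp h2).2
      have : μz z - 2 * ε < C / n := by linarith
      have : ε < C / n := by rw [hεdef] at this ⊢; linarith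
      linarith
    calc μ {ω | zhat n ω = z} ≤ μ ({ω | ε ≤ |S n z ω / n - μz z|}
          ∪ {ω | ε ≤ |S n zs ω / n - μz zs|}) := measure_mono hsub
      _ ≤ _ := measure_union_le _ _
  -- combine over finitely many z
  set T : Finset Z := Finset.univ.filter (fun z => z ≠ zs ∧ 0 < p z) with hT
  have hsum : Tendsto (fun n => ∑ z ∈ T, μ {ω | zhat n ω = z}) atTop (nhds 0) := by
    have := tendsto_finset_sum T (fun z hz => by
      rw [hT, Finset.mem_filter] at hz
      exact key z hz.2.1 hz.2.2)
    simpa using this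
  refine tendsto_of_tendsto_of_tendsto_of_le_of_le' tendsto_const_nhds hsum
    (Eventually.of_forall fun n => zero_le) (Eventually.of_forall fun n => ?_)
  have hsub : {ω | zhat n ω ≠ zs} ⊆ ⋃ z ∈ T, {ω | zhat n ω = z} := by
    intro ω hω
    simp only [Set.mem_setOf_eq] at hω
    exact Set.mem_biUnion (Finset.mem_filter.mpr ⟨Finset.mem_univ _, hω, hzhat_supp n ω⟩) rfl
  exact (measure_mono hsub).trans (measure_biUnion_finset_le T _)
end

section
/- Let Z be a finite set, p a prior on Z, and for each z let hat-S_n(z) be random variables with hat-S_n(z)/n converging in probability to bar-mu(z). Let Z-bar* be the set of minimizers of bar-mu over supp(p) and assume p assigns positive mass to Z-bar*. Define the posterior hat-p(z) proportional to p(z) exp(-hat-S_n(z)). Then the total posterior mass on Z-bar*, i.e., sum over z in Z-bar* of hat-p(z), converges in probability to 1 as n tends to infinity. -/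
open MeasureTheory Filter Finset Classical

/-- Posterior consistency under general (possibly misspecified) conditions.
With `hatS n z / n → barμ z` in probability and `Zbar*` the set of minimizers of
`barμ` over the support of `p` (assumed to carry positive prior mass), the total
posterior mass on `Zbar*` converges in probability to 1. -/
theorem bip_posterior_consistency_general
    {Ω : Type*} [MeasurableSpace Ω] (μ : Measure Ω) [IsProbabilityMeasure μ]
    {Z : Type*} [Fintype Z]
    (p : Z → ℝ) (hp0 : ∀ z, 0 ≤ p z) (hp1 : ∑ z, p z = 1)
    (hatS : ℕ → Z → Ω → ℝ) (barμ : Z → ℝ)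
    (hconv : ∀ z, 0 < p z → ∀ ε > (0 : ℝ),
      Tendsto (fun n => μ {ω | ε ≤ |hatS n z ω / n - barμ z|}) atTop (nhds 0))
    (Zbar : Set Z)
    (hZbar : Zbar = {z | 0 < p z ∧ ∀ z', 0 < p z' → barμ z ≤ barμ z'})
    (hmass : ∃ z ∈ Zbar, 0 < p z) :
    ∀ ε > (0 : ℝ),
      Tendsto (fun n => μ {ω |
          ε ≤ |(∑ z ∈ Finset.univ.filter (fun z => z ∈ Zbar),
                  p z * Real.exp (-(hatS n z ω))) /
                (∑ z', p z' * Real.exp (-(hatS n z' ω))) - 1|})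
        atTop (nhds 0) := by
  classical
  intro ε hε
  obtain ⟨z0, hz0Z, hz0p⟩ := hmass
  have hz0min : ∀ z', 0 < p z' → barμ z0 ≤ barμ z' := by
    rw [hZbar] at hz0Z; exact hz0Z.2
  -- gap δ
  obtain ⟨δ, hδpos, hδ⟩ : ∃ δ > 0, ∀ z, 0 < p z → z ∉ Zbar → barμ z0 + δ ≤ barμ z := by
    set T : Finset Z := univ.filter (fun z => 0 < p z ∧ z ∉ Zbar) with hT
    rcases T.eq_empty_or_nonempty with hTe | hTne
    · refine ⟨1, one_pos, fun z hz hzn => ?_⟩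
      exfalso
      have : z ∈ T := by simp [hT, hz, hzn]
      simp [hTe] at this
    · obtain ⟨b, hbT, hbmin⟩ := T.exists_min_image barμ hTne
      have hbp : 0 < p b ∧ b ∉ Zbar := by simpa [hT] using hbT
      have hblt : barμ z0 < barμ b := by
        by_contra hle
        push_neg at hle
        apply hbp.2
        rw [hZbar]
        exact ⟨hbp.1, fun z' hz' => le_trans hle (hz0min z' hz')⟩
      refine ⟨barμ b - barμ z0, by linarith, fun z hz hzn => ?_⟩
      have hzT : z ∈ T := by simp [hT, hz, hzn]
      have := hbmin z hzT
      linarith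
  -- choose N
  have htend : Tendsto (fun n : ℕ => Real.exp (-((n : ℝ) * (δ / 2))) / p z0)
      atTop (nhds 0) := by
    have h1 : Tendsto (fun n : ℕ => -((n : ℝ) * (δ / 2))) atTop atBot :=
      tendsto_neg_atTop_atBot.comp
        (tendsto_natCast_atTop_atTop.atTop_mul_const (half_pos hδpos))
    have h2 : Tendsto (fun n : ℕ => Real.exp (-((n : ℝ) * (δ / 2)))) atTop (nhds 0) :=
      Real.tendsto_exp_atBot.comp h1
    simpa using h2.div_const (p z0)
  have hev : ∀ᶠ n : ℕ in atTop,
      Real.exp (-((n : ℝ) * (δ / 2))) / p z0 < ε ∧ 1 ≤ n :=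
    (htend.eventually (gt_mem_nhds hε)).and (eventually_ge_atTop 1)
  obtain ⟨N, hN⟩ := eventually_atTop.mp hev
  -- deterministic key estimate
  have key : ∀ n, N ≤ n → ∀ ω, (∀ z, 0 < p z → |hatS n z ω / n - barμ z| < δ / 4) →
      |(∑ z ∈ Finset.univ.filter (fun z => z ∈ Zbar),
          p z * Real.exp (-(hatS n z ω))) /
        (∑ z', p z' * Real.exp (-(hatS n z' ω))) - 1| < ε := by
    intro n hn ω hω
    obtain ⟨hNε, hN1⟩ := hN n hn
    have hn0 : (0 : ℝ) < n := by exact_mod_cast Nat.lt_of_lt_of_le Nat.zero_lt_one hN1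
    set A := ∑ z ∈ Finset.univ.filter (fun z => z ∈ Zbar),
      p z * Real.exp (-(hatS n z ω)) with hA
    set B := ∑ z ∈ Finset.univ.filter (fun z => z ∉ Zbar),
      p z * Real.exp (-(hatS n z ω)) with hB
    have hsplit : (∑ z', p z' * Real.exp (-(hatS n z' ω))) = A + B :=
      (Finset.sum_filter_add_sum_filter_not univ _ _).symm
    have hterm_nonneg : ∀ z, 0 ≤ p z * Real.exp (-(hatS n z ω)) :=
      fun z => mul_nonneg (hp0 z) (Real.exp_pos _).le
    -- lower bound on A
    have hz0bound : hatS n z0 ω < (n : ℝ) * (barμ z0 + δ / 4) := by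
      have h := (abs_lt.mp (hω z0 hz0p)).2
      have h2 : hatS n z0 ω / n < barμ z0 + δ / 4 := by linarith
      calc hatS n z0 ω = (hatS n z0 ω / n) * n := by field_simp
        _ < (barμ z0 + δ / 4) * n := mul_lt_mul_of_pos_right h2 hn0
        _ = (n : ℝ) * (barμ z0 + δ / 4) := by ring
    have hA1 : p z0 * Real.exp (-(hatS n z0 ω)) ≤ A :=
      Finset.single_le_sum (fun z _ => hterm_nonneg z) (by simp [hz0Z])
    have hA2 : p z0 * Real.exp (-((n : ℝ) * (barμ z0 + δ / 4))) ≤ A :=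
      le_trans (mul_le_mul_of_nonneg_left (Real.exp_le_exp.mpr (by linarith)) hz0p.le) hA1
    have hApos : 0 < A := lt_of_lt_of_le (by positivity) hA2
    -- upper bound on B
    set E := Real.exp (-((n : ℝ) * (barμ z0 + 3 * δ / 4))) with hE
    have hBle : B ≤ E := by
      have hstep : ∀ z ∈ Finset.univ.filter (fun z => z ∉ Zbar),
          p z * Real.exp (-(hatS n z ω)) ≤ p z * E := by
        intro z hzmem
        rcases eq_or_lt_of_le (hp0 z) with h0 | h0
        · simp [← h0]
        · have hzn : z ∉ Zbar := by simpa using hzmem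
          have hlow := (abs_lt.mp (hω z h0)).1
          have hge : barμ z0 + δ ≤ barμ z := hδ z h0 hzn
          have hhi : (n : ℝ) * (barμ z0 + 3 * δ / 4) ≤ hatS n z ω := by
            have h2 : barμ z0 + 3 * δ / 4 < hatS n z ω / n := by linarith
            calc (n : ℝ) * (barμ z0 + 3 * δ / 4) ≤ (n : ℝ) * (hatS n z ω / n) :=
                  mul_le_mul_of_nonneg_left h2.le hn0.le
              _ = hatS n z ω := by field_simp
          exact mul_le_mul_of_nonneg_left (Real.exp_le_exp.mpr (by linarith)) (hp0 z)
      calc B ≤ ∑ z ∈ Finset.univ.filter (fun z => z ∉ Zbar), p z * E :=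
            Finset.sum_le_sum hstep
        _ = (∑ z ∈ Finset.univ.filter (fun z => z ∉ Zbar), p z) * E := by
            rw [Finset.sum_mul]
        _ ≤ 1 * E := by
            apply mul_le_mul_of_nonneg_right _ (Real.exp_pos _).le
            calc (∑ z ∈ Finset.univ.filter (fun z => z ∉ Zbar), p z)
                ≤ ∑ z, p z := Finset.sum_le_sum_of_subset_of_nonneg
                  (Finset.filter_subset _ _) (fun z _ _ => hp0 z)
              _ = 1 := hp1
        _ = E := one_mul E
    have hBnn : 0 ≤ B := Finset.sum_nonneg (fun z _ => hterm_nonneg z)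
    have hABpos : 0 < A + B := by linarith
    rw [hsplit]
    have heq : A / (A + B) - 1 = -(B / (A + B)) := by field_simp; ring
    rw [heq, abs_neg, abs_of_nonneg (div_nonneg hBnn hABpos.le)]
    have h1 : B / (A + B) ≤ B / A := by
      gcongr
      linarith
    have h2 : B / A ≤ E / (p z0 * Real.exp (-((n : ℝ) * (barμ z0 + δ / 4)))) :=
      div_le_div₀ (Real.exp_pos _).le hBle (by positivity) hA2
    have hfin : E / (p z0 * Real.exp (-((n : ℝ) * (barμ z0 + δ / 4))))
        = Real.exp (-((n : ℝ) * (δ / 2))) / p z0 := by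
      rw [hE, mul_comm (p z0), ← div_div, ← Real.exp_sub]
      congr 2
      ring
    rw [hfin] at h2
    linarith
  -- probabilistic part
  set D : Finset Z := univ.filter (fun z => 0 < p z) with hD
  have hsub : ∀ n, N ≤ n → {ω |
      ε ≤ |(∑ z ∈ Finset.univ.filter (fun z => z ∈ Zbar),
              p z * Real.exp (-(hatS n z ω))) /
            (∑ z', p z' * Real.exp (-(hatS n z' ω))) - 1|}
      ⊆ ⋃ z ∈ D, {ω | δ / 4 ≤ |hatS n z ω / n - barμ z|} := by
    intro n hn ω hω
    by_contra hc
    have hall : ∀ z, 0 < p z → |hatS n z ω / n - barμ z| < δ / 4 := by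
      intro z hz
      by_contra h'
      push_neg at h'
      exact hc (Set.mem_biUnion (show z ∈ D by simp [hD, hz]) h')
    exact absurd hω (not_le.mpr (key n hn ω hall))
  have hbound : ∀ n ≥ N, μ {ω |
      ε ≤ |(∑ z ∈ Finset.univ.filter (fun z => z ∈ Zbar),
              p z * Real.exp (-(hatS n z ω))) /
            (∑ z', p z' * Real.exp (-(hatS n z' ω))) - 1|}
      ≤ ∑ z ∈ D, μ {ω | δ / 4 ≤ |hatS n z ω / n - barμ z|} :=
    fun n hn => le_trans (measure_mono (hsub n hn)) (measure_biUnion_finset_le D _)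
  have hsum0 : Tendsto (fun n => ∑ z ∈ D, μ {ω | δ / 4 ≤ |hatS n z ω / n - barμ z|})
      atTop (nhds 0) := by
    have h := tendsto_finset_sum D
      (fun z hz => hconv z (by simpa [hD] using hz) (δ / 4) (by positivity))
    simpa using h
  refine tendsto_of_tendsto_of_tendsto_of_le_of_le' tendsto_const_nhds hsum0
    (Eventually.of_forall (fun n => zero_le)) (eventually_atTop.mpr ⟨N, hbound⟩)
end
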